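/- Let {x_1,…,x_d} and {z_1,…,z_d} be two orthonormal bases of ℂ^d with overlapping matrix U, coefficients s_1,…,s_d, and bound vector ω^{X⊕Z} as defined. Then for every density matrix ρ on ℂ^d, the 2d-dimensional vector p(x|ρ) ⊕ p(z|ρ) (the concatenation of the two measurement distributions) is majorized by ω^{X⊕Z}. -/

import Mathlib

open Matrix
open scoped Kronecker ComplexOrder

noncomputable section

/-- Sum of the `k` largest entries of `v` (zero-padding implicit for nonneg vectors):
the maximum of `∑ i ∈ s, v i` over subsets `s` of cardinality at most `k`. -/
def topSum {ι : Type*} [Fintype ι] (v : ι → ℝ) (k : ℕ) : ℝ :=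
  (Finset.univ.powerset.filter fun s => s.card ≤ k).sup' ⟨∅, by simp⟩ fun s => ∑ i ∈ s, v i

/-- `v ≺ w` (majorization, with implicit zero padding): every partial sum of the `k` largest
entries of `v` is at most that of `w`, and the total sums are equal. -/
def Majorizes {ι κ : Type*} [Fintype ι] [Fintype κ] (v : ι → ℝ) (w : κ → ℝ) : Prop :=
  (∀ k : ℕ, topSum v k ≤ topSum w k) ∧ (∑ i, v i = ∑ j, w j)

/-- The operator norm (largest singular value) of a complex matrix. -/
def opNorm {m n : Type*} [Fintype m] [Fintype n] [DecidableEq n] (M : Matrix m n ℂ) : ℝ :=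
  ‖LinearMap.toContinuousLinearMap (Matrix.toEuclideanLin M)‖

/-- `sCoef U k = s_k`: the maximum operator norm over all submatrices of `U` of class `k`,
i.e. obtained by selecting nonempty row/column sets `R`, `C` with `|R| + |C| = k + 1`. -/
def sCoef {d : ℕ} (U : Matrix (Fin d) (Fin d) ℂ) (k : ℕ) : ℝ :=
  sSup { r : ℝ | ∃ R C : Finset (Fin d), R.Nonempty ∧ C.Nonempty ∧ R.card + C.card = k + 1 ∧
    r = opNorm (U.submatrix (fun i : {i // i ∈ R} => (i : Fin d))
                            (fun j : {j // j ∈ C} => (j : Fin d))) }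

/-- The bound vector `ω^{X⊕Z} = (1, s_1, s_2 - s_1, …, s_d - s_{d-1}, 0, …, 0) ∈ ℝ^{2d}`.
(Note `sCoef U 0 = sSup ∅ = 0`, so the entry at index `1` is `s_1`.) -/
def omegaDS {d : ℕ} (U : Matrix (Fin d) (Fin d) ℂ) : Fin (2 * d) → ℝ := fun i =>
  if (i : ℕ) = 0 then 1
  else if (i : ℕ) ≤ d then sCoef U (i : ℕ) - sCoef U ((i : ℕ) - 1)
  else 0

/-- A density matrix: positive semidefinite with unit trace. -/
def IsDensityMatrix {n : Type*} [Fintype n] (ρ : Matrix n n ℂ) : Prop :=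
  ρ.PosSemidef ∧ ρ.trace = 1

/-- A family of vectors forming an orthonormal basis of `ℂ^d` (w.r.t. `⟨u, v⟩ = star u ⬝ᵥ v`). -/
def OrthonormalBasisVecs {d : ℕ} (x : Fin d → Fin d → ℂ) : Prop :=
  ∀ i j, star (x i) ⬝ᵥ x j = if i = j then 1 else 0

/-- Measurement distribution of a density matrix `ρ` in the basis `x`: `p i = ⟨x i, ρ (x i)⟩`. -/
def measDist {d : ℕ} (x : Fin d → Fin d → ℂ) (ρ : Matrix (Fin d) (Fin d) ℂ) : Fin d → ℝ :=
  fun i => (star (x i) ⬝ᵥ (ρ *ᵥ x i)).re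

/-- The tensor product of vectors. -/
def tensorVec {dA dB : ℕ} (u : Fin dA → ℂ) (v : Fin dB → ℂ) : Fin dA × Fin dB → ℂ :=
  fun ab => u ab.1 * v ab.2

/-- Joint measurement distribution of a bipartite density matrix `ρ` in the product basis
`{xA i ⊗ xB j}`: `p (i,j) = ⟨xA i ⊗ xB j, ρ (xA i ⊗ xB j)⟩`. -/
def jointDist {dA dB : ℕ} (xA : Fin dA → Fin dA → ℂ) (xB : Fin dB → Fin dB → ℂ)
    (ρ : Matrix (Fin dA × Fin dB) (Fin dA × Fin dB) ℂ) : Fin dA × Fin dB → ℝ :=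
  fun ij => (star (tensorVec (xA ij.1) (xB ij.2)) ⬝ᵥ (ρ *ᵥ tensorVec (xA ij.1) (xB ij.2))).re

open scoped Classical in
/-- The finite set of distinct values of the products `α i * β j`. -/
def valueSet {dA dB : ℕ} (α : Fin dA → ℝ) (β : Fin dB → ℝ) : Finset ℝ :=
  Finset.image (fun ij : Fin dA × Fin dB => α ij.1 * β ij.2) Finset.univ

open scoped Classical in
/-- The grouped distribution of a joint distribution `p`, indexed by the distinct values `l`
of the products `α i * β j`, with entries `∑_{(i,j) : α i * β j = l} p (i,j)`. -/
def groupedDist {dA dB : ℕ} (α : Fin dA → ℝ) (β : Fin dB → ℝ)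
    (p : Fin dA × Fin dB → ℝ) : valueSet α β → ℝ :=
  fun l => ∑ ij ∈ Finset.univ.filter (fun ij : Fin dA × Fin dB => α ij.1 * β ij.2 = (l : ℝ)), p ij

/-- Separability: `ρ` is a finite convex combination of tensor products of density matrices. -/
def IsSeparableState {dA dB : ℕ} (ρ : Matrix (Fin dA × Fin dB) (Fin dA × Fin dB) ℂ) : Prop :=
  ∃ (K : ℕ) (lam : Fin K → ℝ) (σ : Fin K → Matrix (Fin dA) (Fin dA) ℂ)
    (τ : Fin K → Matrix (Fin dB) (Fin dB) ℂ),
    (∀ k, 0 ≤ lam k) ∧ (∑ k, lam k = 1) ∧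
    (∀ k, IsDensityMatrix (σ k)) ∧ (∀ k, IsDensityMatrix (τ k)) ∧
    ρ = ∑ k, (lam k : ℂ) • (σ k ⊗ₖ τ k)


/-! For sets `A`, `B` of outcomes let `P`, `Q` be the projections onto the spans of
`{x i | i ∈ A}` and `{z j | j ∈ B}`. Then `p_A + q_B = tr ρ (P + Q) ≤ 1 + ‖P Q‖ = 1 + ‖U_{A,B}‖`,
because for every vector `u`, `S := ‖P u‖² + ‖Q u‖² = re ⟪P u + Q u, u⟫` while
`‖P u + Q u‖² ≤ (1 + ‖P Q‖) S`. As `s_k` grows with `k` up to `k = d`, the sum of any `k ≤ d + 1`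
entries of `p(x|ρ) ⊕ p(z|ρ)` is at most `1 + s_{k-1}`, which is the sum of the first `k` entries
of `ω`. Finally `s_d = 1`, since a column of the unitary `U` is a submatrix of class `d`. -/

open scoped InnerProductSpace Matrix.Norms.L2Operator MatrixOrder

section InnerProductSpace

variable {𝕜 E : Type*} [RCLike 𝕜] [NormedAddCommGroup E] [InnerProductSpace 𝕜 E]

theorem norm_sq_add_norm_sq_le_of_re_inner_eq {u a b : E} {s : ℝ} (hs : 0 ≤ s)
    (ha : RCLike.re ⟪a, u⟫_𝕜 = ‖a‖ ^ 2) (hb : RCLike.re ⟪b, u⟫_𝕜 = ‖b‖ ^ 2)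
    (hab : ‖⟪a, b⟫_𝕜‖ ≤ s * (‖a‖ * ‖b‖)) :
    ‖a‖ ^ 2 + ‖b‖ ^ 2 ≤ (1 + s) * ‖u‖ ^ 2 := by
  set S := ‖a‖ ^ 2 + ‖b‖ ^ 2
  have hS : S ≤ ‖a + b‖ * ‖u‖ :=
    calc S = RCLike.re ⟪a + b, u⟫_𝕜 := by rw [inner_add_left, map_add, ha, hb]
      _ ≤ ‖⟪a + b, u⟫_𝕜‖ := RCLike.re_le_norm _
      _ ≤ ‖a + b‖ * ‖u‖ := norm_inner_le_norm _ _
  have hab' : ‖a + b‖ ^ 2 ≤ (1 + s) * S := by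
    have := (RCLike.re_le_norm ⟪a, b⟫_𝕜).trans hab
    rw [@norm_add_sq 𝕜]
    nlinarith [two_mul_le_add_sq ‖a‖ ‖b‖]
  rcases (by positivity : 0 ≤ S).eq_or_lt with h0 | hpos
  · rw [← h0]; positivity
  · refine le_of_mul_le_mul_left ?_ hpos
    calc S * S ≤ (‖a + b‖ * ‖u‖) * (‖a + b‖ * ‖u‖) := mul_self_le_mul_self hpos.le hS
      _ = ‖a + b‖ ^ 2 * ‖u‖ ^ 2 := by ring
      _ ≤ (1 + s) * S * ‖u‖ ^ 2 := by gcongr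
      _ = S * ((1 + s) * ‖u‖ ^ 2) := by ring

end InnerProductSpace

namespace Matrix

theorem conjTranspose_mul_self_submatrix_eq_one {α m n m' n' : Type*} [NonAssocSemiring α]
    [Star α] [Fintype n] [Fintype n'] [DecidableEq m] [DecidableEq m'] {X : Matrix n m α}
    (hX : Xᴴ * X = 1) {e : n' → n} (he : Function.Bijective e) {f : m' → m}
    (hf : Function.Injective f) : (X.submatrix e f)ᴴ * X.submatrix e f = 1 := by
  rw [conjTranspose_submatrix, ← submatrix_mul _ _ _ _ _ he, hX, submatrix_one _ hf]

variable {𝕜 : Type*} [RCLike 𝕜] {l m n p m' n' : Type*} [Fintype l] [Fintype m] [Fintype n]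
  [Fintype p] [Fintype m'] [Fintype n'] [DecidableEq m] [DecidableEq n] [DecidableEq p]
  [DecidableEq m'] [DecidableEq n']

theorem inner_toEuclideanLin_left (A : Matrix m n 𝕜) (v : EuclideanSpace 𝕜 n)
    (w : EuclideanSpace 𝕜 m) : ⟪toEuclideanLin A v, w⟫_𝕜 = ⟪v, toEuclideanLin Aᴴ w⟫_𝕜 := by
  rw [toEuclideanLin_conjTranspose_eq_adjoint, LinearMap.adjoint_inner_right]

theorem norm_toEuclideanLin_apply_of_conjTranspose_mul_self {X : Matrix n m 𝕜}
    (hX : Xᴴ * X = 1) (v : EuclideanSpace 𝕜 m) : ‖toEuclideanLin X v‖ = ‖v‖ := by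
  have h : ⟪toEuclideanLin X v, toEuclideanLin X v⟫_𝕜 = ⟪v, v⟫_𝕜 := by
    rw [inner_toEuclideanLin_left, ← LinearMap.comp_apply, ← toLpLin_mul_same, hX, toLpLin_one,
      LinearMap.id_apply]
  rw [← sq_eq_sq₀ (norm_nonneg _) (norm_nonneg _), @norm_sq_eq_re_inner 𝕜,
    @norm_sq_eq_re_inner 𝕜, h]

theorem l2_opNorm_le_one_of_conjTranspose_mul_self {X : Matrix n m 𝕜} (hX : Xᴴ * X = 1) :
    ‖X‖ ≤ 1 :=
  ContinuousLinearMap.opNorm_le_bound _ zero_le_one fun v => by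
    simpa using (norm_toEuclideanLin_apply_of_conjTranspose_mul_self hX v).le

omit [DecidableEq n] in
theorem l2_opNorm_eq_one_of_conjTranspose_mul_self [Nonempty m] {X : Matrix n m 𝕜}
    (hX : Xᴴ * X = 1) : ‖X‖ = 1 := by
  have h : ‖X‖ * ‖X‖ = 1 := by rw [← l2_opNorm_conjTranspose_mul_self, hX, CStarRing.norm_one]
  nlinarith [norm_nonneg X]

theorem l2_opNorm_submatrix_le (M : Matrix m n 𝕜) {e : m' → m} (he : Function.Injective e)
    {f : n' → n} (hf : Function.Injective f) : ‖M.submatrix e f‖ ≤ ‖M‖ := by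
  set E := (1 : Matrix m m 𝕜).submatrix id e
  set F := (1 : Matrix n n 𝕜).submatrix id f
  have hE : Eᴴ * E = 1 :=
    conjTranspose_mul_self_submatrix_eq_one (by simp) Function.bijective_id he
  have hF : Fᴴ * F = 1 :=
    conjTranspose_mul_self_submatrix_eq_one (by simp) Function.bijective_id hf
  have hM : M.submatrix e f = Eᴴ * M * F := by
    ext i j
    simp [E, F, mul_apply, one_apply]
  calc ‖M.submatrix e f‖ ≤ ‖Eᴴ‖ * ‖M‖ * ‖F‖ := by
        rw [hM]; exact (l2_opNorm_mul _ _).trans (by gcongr; exact l2_opNorm_mul _ _)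
    _ ≤ 1 * ‖M‖ * 1 := by
        rw [l2_opNorm_conjTranspose]
        gcongr
        · exact l2_opNorm_le_one_of_conjTranspose_mul_self hE
        · exact l2_opNorm_le_one_of_conjTranspose_mul_self hF
    _ = ‖M‖ := by ring

theorem norm_toEuclideanLin_conjTranspose_sq_add_le {X : Matrix n m 𝕜} {Z : Matrix n p 𝕜}
    (hX : Xᴴ * X = 1) (hZ : Zᴴ * Z = 1) (v : EuclideanSpace 𝕜 n) :
    ‖toEuclideanLin Xᴴ v‖ ^ 2 + ‖toEuclideanLin Zᴴ v‖ ^ 2 ≤ (1 + ‖Xᴴ * Z‖) * ‖v‖ ^ 2 := by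
  set α := toEuclideanLin Xᴴ v
  set β := toEuclideanLin Zᴴ v
  have hXα := norm_toEuclideanLin_apply_of_conjTranspose_mul_self hX α
  have hZβ := norm_toEuclideanLin_apply_of_conjTranspose_mul_self hZ β
  have key := norm_sq_add_norm_sq_le_of_re_inner_eq (𝕜 := 𝕜) (u := v)
    (a := toEuclideanLin X α) (b := toEuclideanLin Z β) (norm_nonneg (Xᴴ * Z)) ?_ ?_ ?_
  · rwa [hXα, hZβ] at key
  · rw [inner_toEuclideanLin_left, hXα, inner_self_eq_norm_sq]
  · rw [inner_toEuclideanLin_left, hZβ, inner_self_eq_norm_sq]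
  · rw [inner_toEuclideanLin_left, ← LinearMap.comp_apply, ← toLpLin_mul_same, hXα, hZβ]
    calc ‖⟪α, toEuclideanLin (Xᴴ * Z) β⟫_𝕜‖ ≤ ‖α‖ * ‖toEuclideanLin (Xᴴ * Z) β‖ :=
          norm_inner_le_norm _ _
      _ ≤ ‖α‖ * (‖Xᴴ * Z‖ * ‖β‖) := by gcongr; exact (Xᴴ * Z).l2_opNorm_mulVec β
      _ = ‖Xᴴ * Z‖ * (‖α‖ * ‖β‖) := by ring

omit [DecidableEq m] in
theorem re_trace_conjTranspose_mul_mul_eq_sum (Y : Matrix n m 𝕜) (W : Matrix l n 𝕜) :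
    RCLike.re (Yᴴ * (Wᴴ * W) * Y).trace =
      ∑ t, ‖toEuclideanLin Yᴴ (WithLp.toLp 2 (star (W t)))‖ ^ 2 := by
  have hentry (t : l) (i : m) : ‖(Yᴴ *ᵥ star (W t)) i‖ = ‖(W * Y) t i‖ := by
    rw [← norm_star]
    simp [mulVec, dotProduct, mul_apply, star_sum, mul_comm]
  have htrace : Yᴴ * (Wᴴ * W) * Y = (W * Y)ᴴ * (W * Y) := by
    simp only [conjTranspose_mul, Matrix.mul_assoc]
  simp only [htrace, EuclideanSpace.norm_sq_eq, toLpLin_apply, hentry]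
  rw [Finset.sum_comm]
  simp only [trace, diag_apply, mul_apply (M := (W * Y)ᴴ), conjTranspose_apply, RCLike.star_def,
    RCLike.conj_mul, map_sum, ← RCLike.ofReal_pow, RCLike.ofReal_re]

theorem PosSemidef.re_trace_conjTranspose_mul_mul_add_le {ρ : Matrix n n 𝕜} (hρ : ρ.PosSemidef)
    {X : Matrix n m 𝕜} {Z : Matrix n p 𝕜} (hX : Xᴴ * X = 1) (hZ : Zᴴ * Z = 1) :
    RCLike.re (Xᴴ * ρ * X).trace + RCLike.re (Zᴴ * ρ * Z).trace ≤
      (1 + ‖Xᴴ * Z‖) * RCLike.re ρ.trace := by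
  obtain ⟨W, rfl⟩ := CStarAlgebra.nonneg_iff_eq_star_mul_self.mp hρ.nonneg
  have htr := re_trace_conjTranspose_mul_mul_eq_sum (1 : Matrix n n 𝕜) W
  simp only [conjTranspose_one, Matrix.one_mul, Matrix.mul_one, toLpLin_one,
    LinearMap.id_apply] at htr
  rw [star_eq_conjTranspose, re_trace_conjTranspose_mul_mul_eq_sum,
    re_trace_conjTranspose_mul_mul_eq_sum, htr, ← Finset.sum_add_distrib, Finset.mul_sum]
  exact Finset.sum_le_sum fun t _ => norm_toEuclideanLin_conjTranspose_sq_add_le hX hZ _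

end Matrix

section TopSum

variable {ι : Type*} [Fintype ι] (v : ι → ℝ)

theorem sum_le_topSum {s : Finset ι} {k : ℕ} (hs : s.card ≤ k) : ∑ i ∈ s, v i ≤ topSum v k :=
  Finset.le_sup' (fun t => ∑ i ∈ t, v i) (by simpa using hs)

theorem topSum_le {k : ℕ} {c : ℝ} (h : ∀ s : Finset ι, s.card ≤ k → ∑ i ∈ s, v i ≤ c) :
    topSum v k ≤ c :=
  Finset.sup'_le _ _ fun s hs => h s (Finset.mem_filter.mp hs).2

theorem topSum_zero : topSum v 0 = 0 :=
  le_antisymm (topSum_le v fun s hs => by simp [Finset.card_eq_zero.mp (Nat.le_zero.mp hs)])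
    (by simpa using sum_le_topSum v (s := ∅) le_rfl)

theorem topSum_mono : Monotone (topSum v) := fun _ _ hkl =>
  topSum_le v fun _ hs => sum_le_topSum v (hs.trans hkl)

theorem topSum_le_sum (hv : 0 ≤ v) (k : ℕ) : topSum v k ≤ ∑ i, v i :=
  topSum_le v fun _ _ => Finset.sum_le_univ_sum_of_nonneg hv

end TopSum

theorem opNorm_eq_l2_opNorm {m n : Type*} [Fintype m] [Fintype n] [DecidableEq n]
    (M : Matrix m n ℂ) : opNorm M = ‖M‖ := rfl

section SCoef

variable {d : ℕ} (U : Matrix (Fin d) (Fin d) ℂ)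

theorem opNorm_submatrix_le_sCoef {R C : Finset (Fin d)} (hR : R.Nonempty) (hC : C.Nonempty)
    {k : ℕ} (hk : R.card + C.card = k + 1) :
    opNorm (U.submatrix ((↑) : R → Fin d) ((↑) : C → Fin d)) ≤ sCoef U k := by
  refine le_csSup ?_ ⟨R, C, hR, hC, hk, rfl⟩
  refine (Set.finite_range fun RC : Finset (Fin d) × Finset (Fin d) =>
    opNorm (U.submatrix ((↑) : RC.1 → Fin d) ((↑) : RC.2 → Fin d))).subset ?_ |>.bddAbove
  rintro _ ⟨R, C, -, -, -, rfl⟩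
  exact ⟨(R, C), rfl⟩

theorem sCoef_le {k : ℕ} {c : ℝ} (hc : 0 ≤ c)
    (h : ∀ R C : Finset (Fin d), R.Nonempty → C.Nonempty → R.card + C.card = k + 1 →
      opNorm (U.submatrix ((↑) : R → Fin d) ((↑) : C → Fin d)) ≤ c) :
    sCoef U k ≤ c :=
  Real.sSup_le (by rintro _ ⟨R, C, hR, hC, hk, rfl⟩; exact h R C hR hC hk) hc

theorem sCoef_nonneg (k : ℕ) : 0 ≤ sCoef U k :=
  Real.sSup_nonneg (by rintro _ ⟨R, C, -, -, -, rfl⟩; exact norm_nonneg _)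

theorem sCoef_zero : sCoef U 0 = 0 :=
  le_antisymm (sCoef_le U le_rfl fun R C hR hC hk => by
    have hR₀ := hR.card_pos; have hC₀ := hC.card_pos; omega) (sCoef_nonneg U 0)

theorem sCoef_le_sCoef_succ {k : ℕ} (hk : k < d) : sCoef U k ≤ sCoef U (k + 1) := by
  refine sCoef_le U (sCoef_nonneg U _) fun R C hR hC hRC => ?_
  obtain ⟨a, ha⟩ : Rᶜ.Nonempty := by
    rw [← Finset.card_pos, Finset.card_compl, Fintype.card_fin]
    have hC₀ := hC.card_pos
    omega
  rw [Finset.mem_compl] at ha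
  have hsub : U.submatrix ((↑) : R → Fin d) ((↑) : C → Fin d) =
      (U.submatrix ((↑) : {i // i ∈ insert a R} → Fin d) ((↑) : C → Fin d)).submatrix
        (Set.inclusion (Finset.subset_insert a R)) id := rfl
  rw [hsub, opNorm_eq_l2_opNorm]
  refine (Matrix.l2_opNorm_submatrix_le _ (Set.inclusion_injective _)
    Function.injective_id).trans ?_
  exact opNorm_submatrix_le_sCoef U (Finset.insert_nonempty a R) hC
    (by rw [Finset.card_insert_of_notMem ha]; omega)

theorem sCoef_mono {j k : ℕ} (hjk : j ≤ k) (hk : k ≤ d) : sCoef U j ≤ sCoef U k := by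
  induction k, hjk using Nat.le_induction with
  | base => exact le_rfl
  | succ k _ ih => exact (ih (by omega)).trans (sCoef_le_sCoef_succ U (by omega))

theorem sCoef_self_eq_one [NeZero d] (hU : Uᴴ * U = 1) : sCoef U d = 1 := by
  refine le_antisymm (sCoef_le U zero_le_one fun R C _ _ _ => ?_) ?_
  · exact (U.l2_opNorm_submatrix_le Subtype.val_injective Subtype.val_injective).trans
      (Matrix.l2_opNorm_le_one_of_conjTranspose_mul_self hU)
  · have hval : Function.Bijective ((↑) : {i // i ∈ (Finset.univ : Finset (Fin d))} → Fin d) :=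
      ⟨Subtype.val_injective, fun i => ⟨⟨i, Finset.mem_univ i⟩, rfl⟩⟩
    have hcol := Matrix.conjTranspose_mul_self_submatrix_eq_one hU hval
      (Subtype.val_injective (p := (· ∈ ({0} : Finset (Fin d)))))
    rw [← Matrix.l2_opNorm_eq_one_of_conjTranspose_mul_self hcol, ← opNorm_eq_l2_opNorm]
    exact opNorm_submatrix_le_sCoef U Finset.univ_nonempty (Finset.singleton_nonempty 0)
      (by simp)

theorem sum_omegaDS_castLE {k : ℕ} (hk : 1 ≤ k) (hkd : k ≤ d + 1) (h2d : k ≤ 2 * d) :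
    ∑ i : Fin k, omegaDS U (Fin.castLE h2d i) = 1 + sCoef U (k - 1) := by
  induction k, hk using Nat.le_induction with
  | base => simp [omegaDS, sCoef_zero]
  | succ k hk ih =>
    rw [Fin.sum_univ_castSucc]
    simp only [Fin.castLE_castSucc, ih (by omega) (by omega)]
    simp only [omegaDS, Fin.val_castLE, Fin.val_last]
    rw [if_neg (by omega), if_pos (by omega)]
    simp

theorem one_add_sCoef_le_topSum_omegaDS {k : ℕ} (hk : 1 ≤ k) (hkd : k ≤ d + 1)
    (h2d : k ≤ 2 * d) : 1 + sCoef U (k - 1) ≤ topSum (omegaDS U) k := by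
  rw [← sum_omegaDS_castLE U hk hkd h2d]
  simpa using sum_le_topSum (omegaDS U) (s := Finset.univ.map (Fin.castLEEmb h2d)) (by simp)

theorem sum_omegaDS [NeZero d] (hU : Uᴴ * U = 1) : ∑ i, omegaDS U i = 2 := by
  have hd : d + 1 ≤ 2 * d := by have := NeZero.pos d; omega
  rw [← Finset.sum_subset (Finset.subset_univ (Finset.univ.map (Fin.castLEEmb hd))),
    Finset.sum_map]
  · simp only [Fin.castLEEmb_apply]
    rw [sum_omegaDS_castLE U le_add_self le_rfl hd, Nat.add_sub_cancel, sCoef_self_eq_one U hU]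
    norm_num
  · intro i _ hi
    have hdi : d + 1 ≤ (i : ℕ) := by
      by_contra h
      exact hi (Finset.mem_map.mpr ⟨⟨i, by omega⟩, Finset.mem_univ _, rfl⟩)
    simp only [omegaDS]
    rw [if_neg (by omega), if_neg (by omega)]

end SCoef

section Measurement

variable {d : ℕ} {x z : Fin d → Fin d → ℂ} {U ρ : Matrix (Fin d) (Fin d) ℂ}

theorem OrthonormalBasisVecs.conjTranspose_mul_self (hx : OrthonormalBasisVecs x) :
    (of x)ᵀᴴ * (of x)ᵀ = 1 := by
  ext i j
  simpa [mul_apply, dotProduct, one_apply] using hx i j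

theorem eq_conjTranspose_mul_of_overlap (hU : ∀ i j, U i j = star (x i) ⬝ᵥ z j) :
    U = (of x)ᵀᴴ * (of z)ᵀ := by
  ext i j
  simp [hU, mul_apply, dotProduct]

theorem conjTranspose_mul_self_eq_one_of_overlap (hx : OrthonormalBasisVecs x)
    (hz : OrthonormalBasisVecs z) (hU : ∀ i j, U i j = star (x i) ⬝ᵥ z j) : Uᴴ * U = 1 := by
  rw [eq_conjTranspose_mul_of_overlap hU, conjTranspose_mul, conjTranspose_conjTranspose,
    Matrix.mul_assoc, ← Matrix.mul_assoc (of x)ᵀ, mul_eq_one_comm.mp hx.conjTranspose_mul_self,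
    Matrix.one_mul, hz.conjTranspose_mul_self]

theorem measDist_eq_re_diag (i : Fin d) :
    measDist x ρ i = (((of x)ᵀᴴ * ρ * (of x)ᵀ) i i).re := by
  rw [measDist, Matrix.mul_assoc]
  simp [mul_apply, dotProduct, mulVec]

theorem sum_measDist_eq_re_trace (A : Finset (Fin d)) :
    ∑ i ∈ A, measDist x ρ i =
      (((of x)ᵀ.submatrix id ((↑) : A → Fin d))ᴴ * ρ *
        (of x)ᵀ.submatrix id ((↑) : A → Fin d)).trace.re := by
  rw [trace, Complex.re_sum, ← Finset.sum_coe_sort A]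
  refine Finset.sum_congr rfl fun i _ => ?_
  simp [measDist_eq_re_diag, mul_apply]

theorem measDist_nonneg (hρ : ρ.PosSemidef) (i : Fin d) : 0 ≤ measDist x ρ i :=
  hρ.re_dotProduct_nonneg (x i)

theorem sum_measDist_eq_one (hx : OrthonormalBasisVecs x) (hρ : IsDensityMatrix ρ) :
    ∑ i, measDist x ρ i = 1 :=
  calc ∑ i, measDist x ρ i = ((of x)ᵀᴴ * ρ * (of x)ᵀ).trace.re := by
        simp only [measDist_eq_re_diag, trace, diag_apply, Complex.re_sum]
    _ = 1 := by
        rw [trace_mul_cycle, mul_eq_one_comm.mp hx.conjTranspose_mul_self, Matrix.one_mul, hρ.2,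
          Complex.one_re]

theorem sum_measDist_le_one (hx : OrthonormalBasisVecs x) (hρ : IsDensityMatrix ρ)
    (A : Finset (Fin d)) : ∑ i ∈ A, measDist x ρ i ≤ 1 :=
  (Finset.sum_le_univ_sum_of_nonneg (measDist_nonneg hρ.1)).trans_eq (sum_measDist_eq_one hx hρ)

theorem sum_sumElim_measDist_eq_two (hx : OrthonormalBasisVecs x) (hz : OrthonormalBasisVecs z)
    (hρ : IsDensityMatrix ρ) : ∑ i, Sum.elim (measDist x ρ) (measDist z ρ) i = 2 := by
  simp only [Fintype.sum_sum_type, Sum.elim_inl, Sum.elim_inr, sum_measDist_eq_one hx hρ,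
    sum_measDist_eq_one hz hρ]
  norm_num

theorem sum_measDist_add_sum_measDist_le (hx : OrthonormalBasisVecs x)
    (hz : OrthonormalBasisVecs z) (hU : ∀ i j, U i j = star (x i) ⬝ᵥ z j)
    (hρ : IsDensityMatrix ρ) (A B : Finset (Fin d)) :
    ∑ i ∈ A, measDist x ρ i + ∑ j ∈ B, measDist z ρ j ≤
      1 + opNorm (U.submatrix ((↑) : A → Fin d) ((↑) : B → Fin d)) := by
  have hXA := conjTranspose_mul_self_submatrix_eq_one hx.conjTranspose_mul_self
    Function.bijective_id (Subtype.val_injective (p := (· ∈ A)))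
  have hZB := conjTranspose_mul_self_submatrix_eq_one hz.conjTranspose_mul_self
    Function.bijective_id (Subtype.val_injective (p := (· ∈ B)))
  have hUAB : U.submatrix ((↑) : A → Fin d) ((↑) : B → Fin d) =
      ((of x)ᵀ.submatrix id ((↑) : A → Fin d))ᴴ * (of z)ᵀ.submatrix id ((↑) : B → Fin d) := by
    rw [eq_conjTranspose_mul_of_overlap hU, submatrix_mul _ _ _ _ _ Function.bijective_id,
      conjTranspose_submatrix]
  rw [sum_measDist_eq_re_trace, sum_measDist_eq_re_trace, opNorm_eq_l2_opNorm, hUAB]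
  simpa [hρ.2] using hρ.1.re_trace_conjTranspose_mul_mul_add_le hXA hZB

theorem sum_sumElim_measDist_le_one_add_sCoef (hx : OrthonormalBasisVecs x)
    (hz : OrthonormalBasisVecs z) (hU : ∀ i j, U i j = star (x i) ⬝ᵥ z j)
    (hρ : IsDensityMatrix ρ) {k : ℕ} (hk : 1 ≤ k) (hkd : k ≤ d + 1)
    {s : Finset (Fin d ⊕ Fin d)} (hs : s.card ≤ k) :
    ∑ i ∈ s, Sum.elim (measDist x ρ) (measDist z ρ) i ≤ 1 + sCoef U (k - 1) := by
  rw [Finset.sum_sum_eq_sum_toLeft_add_sum_toRight]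
  simp only [Sum.elim_inl, Sum.elim_inr]
  have hcard : s.toLeft.card + s.toRight.card = s.card := Finset.card_toLeft_add_card_toRight
  have hs₀ := sCoef_nonneg U (k - 1)
  rcases s.toLeft.eq_empty_or_nonempty with hA | hA
  · rw [hA, Finset.sum_empty, zero_add]
    linarith [sum_measDist_le_one hz hρ s.toRight]
  rcases s.toRight.eq_empty_or_nonempty with hB | hB
  · rw [hB, Finset.sum_empty, add_zero]
    linarith [sum_measDist_le_one hx hρ s.toLeft]
  have hA₀ := hA.card_pos
  have hB₀ := hB.card_pos
  calc _ ≤ 1 + opNorm (U.submatrix ((↑) : s.toLeft → Fin d) ((↑) : s.toRight → Fin d)) :=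
        sum_measDist_add_sum_measDist_le hx hz hU hρ _ _
    _ ≤ 1 + sCoef U (s.toLeft.card + s.toRight.card - 1) := by
        gcongr; exact opNorm_submatrix_le_sCoef U hA hB (by omega)
    _ ≤ 1 + sCoef U (k - 1) := by gcongr; exact sCoef_mono U (by omega) (by omega)

end Measurement

/-- direct-sum majorization uncertainty relation (Rudnicki–Puchała–Życzkowski):
for any density matrix `ρ`, `p(x|ρ) ⊕ p(z|ρ) ≺ ω^{X⊕Z}`. -/
theorem direct_sum_majorization_uncertainty {d : ℕ} (x z : Fin d → Fin d → ℂ)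
    (hx : OrthonormalBasisVecs x) (hz : OrthonormalBasisVecs z)
    (U : Matrix (Fin d) (Fin d) ℂ) (hU : ∀ i j, U i j = star (x i) ⬝ᵥ z j)
    (ρ : Matrix (Fin d) (Fin d) ℂ) (hρ : IsDensityMatrix ρ) :
    Majorizes (Sum.elim (measDist x ρ) (measDist z ρ)) (omegaDS U) := by
  have : NeZero d := ⟨by rintro rfl; simpa [trace] using hρ.2⟩
  have h2d : d + 1 ≤ 2 * d := by have := NeZero.pos d; omega
  have hUU := conjTranspose_mul_self_eq_one_of_overlap hx hz hU
  have hsum := sum_sumElim_measDist_eq_two hx hz hρ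
  refine ⟨fun k => ?_, by rw [hsum, sum_omegaDS U hUU]⟩
  rcases Nat.eq_zero_or_pos k with rfl | hk
  · rw [topSum_zero, topSum_zero]
  rcases le_or_gt k (d + 1) with hkd | hkd
  · exact (topSum_le _ fun _ hs =>
      sum_sumElim_measDist_le_one_add_sCoef hx hz hU hρ hk hkd hs).trans
        (one_add_sCoef_le_topSum_omegaDS U hk hkd (hkd.trans h2d))
  · calc topSum (Sum.elim (measDist x ρ) (measDist z ρ)) k ≤ 2 := by
          rw [← hsum]
          exact topSum_le_sum _ (fun i => by cases i <;> exact measDist_nonneg hρ.1 _) k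
      _ = 1 + sCoef U (d + 1 - 1) := by rw [Nat.add_sub_cancel, sCoef_self_eq_one U hUU]; norm_num
      _ ≤ topSum (omegaDS U) (d + 1) := one_add_sCoef_le_topSum_omegaDS U le_add_self le_rfl h2d
      _ ≤ topSum (omegaDS U) k := topSum_mono _ hkd.le

end
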